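/- Let p be an odd prime with 2 ^ (p - 1) not congruent to 1 modulo p², and let q ≥ 1. Define φ : (Fin q → ZMod p) → ZMod (p ^ q) by φ g = ∑ i : Fin q, ((g i).val : ZMod (p ^ q)) * (p : ZMod (p ^ q)) ^ (i : ℕ). For x : ZMod (p ^ q), let D x := {y : ZMod (p ^ q) | ∃ m : ℕ, y = (2 : ZMod (p ^ q)) ^ m * x}. Suppose g : Fin q → ZMod p satisfies φ g ∈ D x. Then for every h : Fin q → ZMod p and every m : ℕ, φ ((2 : ZMod p) ^ m • g + h) ∈ {y | ∃ l : ℕ, y = (2 : ZMod (p ^ q)) ^ l * x + φ h}; consequently φ '' {g' + h | g' ∈ φ ⁻¹' (D x)} = {y | ∃ l : ℕ, y = (2 : ZMod (p ^ q)) ^ l * x + φ h}. -/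

import Mathlib

/-! Let `φ` be the base-`p` digit map. If the lowest nonzero digit of `g` sits at position `k`,
then `φ g = p ^ k * s` with `s` a unit, while `φ (n • g + h)` differs from `φ h + n * φ g` only
by carries, all divisible by `p ^ (k + 1)`; hence `φ (n • g + h) = φ h + φ g * (n + p * c)`.
Since `2` is not a Wieferich base, `2 ^ (p - 1) = 1 + p * e` with `p ∤ e`, which has order
`p ^ (q - 1)` in `ZMod (p ^ q)`; so its powers exhaust the units `1 + p * c`, and every
`2 ^ m + p * c` is a power of `2`. -/

theorem IsOfFinOrder.exists_pow_mul_pow_eq_one {M : Type*} [Monoid M] {u : M}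
    (hu : IsOfFinOrder u) (l : ℕ) : ∃ n : ℕ, u ^ n * u ^ l = 1 := by
  refine ⟨(orderOf u - 1) * l, ?_⟩
  rw [← pow_add, Nat.sub_one_mul, Nat.sub_add_cancel (Nat.le_mul_of_pos_left l hu.orderOf_pos),
    pow_mul, pow_orderOf_eq_one, one_pow]

theorem exists_sum_mul_pow_eq_pow_mul {R : Type*} [CommSemiring R] (π : R) {q : ℕ}
    (e : Fin q → R) {k : Fin q} (he : ∀ i < k, e i = 0) :
    ∃ r, ∑ i, e i * π ^ (i : ℕ) = π ^ (k : ℕ) * (e k + π * r) := by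
  obtain ⟨r, hr⟩ : π ^ ((k : ℕ) + 1) ∣ ∑ i ∈ Finset.univ.erase k, e i * π ^ (i : ℕ) := by
    refine Finset.dvd_sum fun i hi => ?_
    rcases lt_or_gt_of_ne (Finset.ne_of_mem_erase hi) with hik | hik
    · simp [he i hik]
    · exact (pow_dvd_pow π hik).mul_left _
  refine ⟨r, ?_⟩
  rw [← Finset.add_sum_erase _ _ (Finset.mem_univ k), hr]
  ring

namespace ZMod

theorem isUnit_natCast_of_not_dvd {p a : ℕ} (hp : p.Prime) (hpa : ¬ p ∣ a) (q : ℕ) :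
    IsUnit (a : ZMod (p ^ q)) :=
  (isUnit_iff_coprime _ _).mpr ((Nat.coprime_comm.mp (hp.coprime_iff_not_dvd.mpr hpa)).pow_right _)

theorem card_ker_unitsMap_prime_pow {p : ℕ} (hp : p.Prime) (n : ℕ) :
    Nat.card (unitsMap (dvd_pow_self p n.succ_ne_zero)).ker = p ^ n := by
  have := Fact.mk hp
  have h := (unitsMap (dvd_pow_self p n.succ_ne_zero)).ker.card_mul_index
  rw [Subgroup.index_ker, MonoidHom.range_eq_top_of_surjective _ (unitsMap_surjective _),
    Subgroup.card_top, Nat.card_eq_fintype_card (α := (ZMod p)ˣ),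
    Nat.card_eq_fintype_card (α := (ZMod (p ^ (n + 1)))ˣ), card_units,
    card_units_eq_totient, Nat.totient_prime_pow_succ hp] at h
  exact Nat.eq_of_mul_eq_mul_right (Nat.sub_pos_of_lt hp.one_lt) h

section NonWieferichBase

variable {p : ℕ} (hp : p.Prime) (hp2 : p ≠ 2) {a : ℕ} (hpa : ¬ p ∣ a)
  (hw : ¬ a ^ (p - 1) ≡ 1 [MOD p ^ 2])
include hp hp2 hpa hw

theorem orderOf_natCast_pow_sub_one (n : ℕ) :
    orderOf ((a : ZMod (p ^ (n + 1))) ^ (p - 1)) = p ^ n := by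
  have := Fact.mk hp
  obtain ⟨e, he⟩ : (p : ℤ) ∣ (a : ℤ) ^ (p - 1) - 1 := by
    apply (intCast_zmod_eq_zero_iff_dvd _ p).mp
    have ha : (a : ZMod p) ≠ 0 := by rwa [Ne, natCast_eq_zero_iff]
    push_cast
    rw [pow_card_sub_one_eq_one ha, sub_self]
  have hpe : ¬ (p : ℤ) ∣ e := by
    rintro ⟨f, rfl⟩
    exact hw (Int.natCast_modEq_iff.mp
      (Int.modEq_iff_dvd.mpr ⟨-f, by push_cast; linear_combination -he⟩))
  have hcast : (a : ZMod (p ^ (n + 1))) ^ (p - 1) = 1 + p * e := by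
    have := congrArg (Int.cast : ℤ → ZMod (p ^ (n + 1))) he
    push_cast at this
    linear_combination this
  rw [hcast]
  exact orderOf_one_add_mul_prime hp hp2 e hpe n

theorem exists_natCast_pow_eq_one_add_mul {q : ℕ} (c : ZMod (p ^ q)) :
    ∃ l : ℕ, (a : ZMod (p ^ q)) ^ l = 1 + p * c := by
  obtain _ | n := q
  · have : Subsingleton (ZMod (p ^ 0)) := by rw [pow_zero]; infer_instance
    exact ⟨0, Subsingleton.elim _ _⟩
  have := Fact.mk hp
  have ha := isUnit_natCast_of_not_dvd hp hpa (n + 1)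
  set K := (unitsMap (dvd_pow_self p n.succ_ne_zero)).ker
  set u := ha.unit ^ (p - 1)
  have hu : u ∈ K := by
    rw [MonoidHom.mem_ker, map_pow, units_pow_card_sub_one_eq_one]
  have hK : K = Subgroup.zpowers u := by
    refine (Subgroup.eq_of_le_of_card_ge (Subgroup.zpowers_le.mpr hu) ?_).symm
    rw [card_ker_unitsMap_prime_pow hp, Nat.card_zpowers, ← orderOf_units,
      Units.val_pow_eq_pow_val, IsUnit.unit_spec, orderOf_natCast_pow_sub_one hp hp2 hpa hw n]
  have hv : IsUnit (1 + (p : ZMod (p ^ (n + 1))) * c) := by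
    refine IsNilpotent.isUnit_one_add ⟨n + 1, ?_⟩
    rw [mul_pow, ← Nat.cast_pow, natCast_self, zero_mul]
  have hvK : hv.unit ∈ K := by
    rw [MonoidHom.mem_ker, Units.ext_iff, unitsMap_val, IsUnit.unit_spec]
    simp
  obtain ⟨l, hl⟩ := mem_powers_iff_mem_zpowers.mpr (hK ▸ hvK)
  refine ⟨(p - 1) * l, ?_⟩
  rw [pow_mul, ← hv.unit_spec, ← hl]
  simp [u]

theorem exists_natCast_pow_eq_pow_add_mul {q : ℕ} (m : ℕ) (c : ZMod (p ^ q)) :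
    ∃ l : ℕ, (a : ZMod (p ^ q)) ^ l = a ^ m + p * c := by
  obtain ⟨b, hb⟩ := ((isUnit_natCast_of_not_dvd hp hpa q).pow m).exists_right_inv
  obtain ⟨l, hl⟩ := exists_natCast_pow_eq_one_add_mul hp hp2 hpa hw (b * c)
  refine ⟨m + l, ?_⟩
  rw [pow_add, hl]
  linear_combination (p * c) * hb

end NonWieferichBase

def ofDigits (p q : ℕ) (a : Fin q → ZMod p) : ZMod (p ^ q) :=
  ∑ i : Fin q, ((a i).val : ZMod (p ^ q)) * (p : ZMod (p ^ q)) ^ (i : ℕ)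

theorem ofDigits_surjective (p q : ℕ) [NeZero p] : Function.Surjective (ofDigits p q) := by
  intro y
  set f : Fin q → Fin p := finFunctionFinEquiv.symm ⟨y.val, y.val_lt⟩
  have hf : y.val = ∑ i, (f i : ℕ) * p ^ (i : ℕ) := by
    rw [← finFunctionFinEquiv_apply, Equiv.apply_symm_apply]
  refine ⟨fun i => (f i : ZMod p), ?_⟩
  simp only [ofDigits, val_cast_of_lt (f _).isLt]
  rw [← natCast_zmod_val y, hf]
  push_cast
  rfl

theorem exists_val_natCast_mul_add (p : ℕ) [NeZero p] (n : ℕ) (b c : ZMod p) :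
    ∃ w : ℤ, (((n : ZMod p) * b + c).val : ℤ) = n * b.val + c.val + p * w := by
  obtain ⟨w, hw⟩ : (p : ℤ) ∣ (((n : ZMod p) * b + c).val : ℤ) - (n * b.val + c.val) :=
    (intCast_zmod_eq_zero_iff_dvd _ p).mp (by push_cast; simp)
  exact ⟨w, by linear_combination hw⟩

section LowestDigit

variable {p q : ℕ} {a : Fin q → ZMod p} {k : Fin q}

theorem exists_ofDigits_eq_pow_mul (ha : ∀ i < k, a i = 0) :
    ∃ r, ofDigits p q a = p ^ (k : ℕ) * ((a k).val + p * r) :=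
  exists_sum_mul_pow_eq_pow_mul _ _ fun i hi => by simp [ha i hi]

theorem exists_ofDigits_natCast_smul_add_eq [NeZero p] (ha : ∀ i < k, a i = 0) (n : ℕ)
    (h : Fin q → ZMod p) :
    ∃ t, ofDigits p q ((n : ZMod p) • a + h)
      = ofDigits p q h + n * ofDigits p q a + p ^ ((k : ℕ) + 1) * t := by
  set carry : Fin q → ZMod (p ^ q) := fun i =>
    (((n : ZMod p) * a i + h i).val : ZMod (p ^ q)) - (h i).val - n * (a i).val
  have hcarry : ofDigits p q ((n : ZMod p) • a + h) - ofDigits p q h - n * ofDigits p q a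
      = ∑ i, carry i * p ^ (i : ℕ) := by
    simp only [ofDigits, Finset.mul_sum, ← Finset.sum_sub_distrib]
    refine Finset.sum_congr rfl fun i _ => ?_
    simp only [carry, Pi.add_apply, Pi.smul_apply, smul_eq_mul]
    ring
  obtain ⟨r, hr⟩ := exists_sum_mul_pow_eq_pow_mul (p : ZMod (p ^ q)) carry (k := k)
    fun i hi => by simp [carry, ha i hi]
  obtain ⟨w, hw⟩ := exists_val_natCast_mul_add p n (a k) (h k)
  have hcarry_k : carry k = p * w := by
    have := congrArg (Int.cast : ℤ → ZMod (p ^ q)) hw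
    push_cast at this
    linear_combination this
  refine ⟨w + r, ?_⟩
  rw [hcarry_k] at hr
  linear_combination hcarry + hr

end LowestDigit

theorem exists_ofDigits_natCast_smul_add {p q : ℕ} (hp : p.Prime) (n : ℕ)
    (a h : Fin q → ZMod p) :
    ∃ c, ofDigits p q ((n : ZMod p) • a + h) = ofDigits p q h + ofDigits p q a * (n + p * c) := by
  have := Fact.mk hp
  rcases eq_or_ne a 0 with rfl | ha
  · exact ⟨0, by simp [ofDigits]⟩
  obtain ⟨k, hk, hmin⟩ := wellFounded_lt.has_min {i | a i ≠ 0} (Function.ne_iff.mp ha)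
  have hbelow : ∀ i < k, a i = 0 := fun i hi => by_contra fun hai => hmin i hai hi
  obtain ⟨r, hr⟩ := exists_ofDigits_eq_pow_mul hbelow
  obtain ⟨t, ht⟩ := exists_ofDigits_natCast_smul_add_eq hbelow n h
  have hs : IsUnit (((a k).val : ZMod (p ^ q)) + p * r) := by
    refine IsNilpotent.isUnit_add_left_of_commute ⟨q, ?_⟩
      (isUnit_natCast_of_not_dvd hp ?_ q) (Commute.all _ _)
    · rw [mul_pow, ← Nat.cast_pow, natCast_self, zero_mul]
    · exact Nat.not_dvd_of_pos_of_lt (val_pos.mpr hk) (val_lt _)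
  obtain ⟨s, hs⟩ := hs.exists_right_inv
  refine ⟨s * t, ?_⟩
  linear_combination ht - (p * s * t) * hr - (p ^ ((k : ℕ) + 1) * t) * hs

theorem exists_ofDigits_pow_smul_add {p : ℕ} (hp : p.Prime) (hp2 : p ≠ 2) {a : ℕ}
    (hpa : ¬ p ∣ a) (hw : ¬ a ^ (p - 1) ≡ 1 [MOD p ^ 2]) {q : ℕ} (m : ℕ)
    (g h : Fin q → ZMod p) :
    ∃ l : ℕ, ofDigits p q ((a : ZMod p) ^ m • g + h)
      = (a : ZMod (p ^ q)) ^ l * ofDigits p q g + ofDigits p q h := by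
  obtain ⟨c, hc⟩ := exists_ofDigits_natCast_smul_add hp (a ^ m) g h
  obtain ⟨l, hl⟩ := exists_natCast_pow_eq_pow_add_mul hp hp2 hpa hw m c
  refine ⟨l, ?_⟩
  rw [← Nat.cast_pow, hc, hl]
  push_cast
  ring

end ZMod

theorem stmt15_general (p q : ℕ) (hp : p.Prime) (hodd : Odd p)
    (hw : ¬ (2 ^ (p - 1) ≡ 1 [MOD p ^ 2]))
    (φ : (Fin q → ZMod p) → ZMod (p ^ q))
    (hφ : ∀ g : Fin q → ZMod p,
      φ g = ∑ i : Fin q, ((g i).val : ZMod (p ^ q)) * (p : ZMod (p ^ q)) ^ (i : ℕ))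
    (x : ZMod (p ^ q)) (g : Fin q → ZMod p)
    (hg : φ g ∈ {y : ZMod (p ^ q) | ∃ m : ℕ, y = (2 : ZMod (p ^ q)) ^ m * x}) :
    (∀ (h : Fin q → ZMod p) (m : ℕ),
        φ ((2 : ZMod p) ^ m • g + h)
          ∈ {y : ZMod (p ^ q) | ∃ l : ℕ, y = (2 : ZMod (p ^ q)) ^ l * x + φ h}) ∧
      ∀ h : Fin q → ZMod p,
        φ '' {w : Fin q → ZMod p |
            ∃ g' ∈ φ ⁻¹' {y : ZMod (p ^ q) | ∃ m : ℕ, y = (2 : ZMod (p ^ q)) ^ m * x},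
              w = g' + h}
          = {y : ZMod (p ^ q) | ∃ l : ℕ, y = (2 : ZMod (p ^ q)) ^ l * x + φ h} := by
  obtain rfl : φ = ZMod.ofDigits p q := funext hφ
  have hp2 : p ≠ 2 := hodd.ne_two_of_dvd_nat dvd_rfl
  have h2 : ¬ p ∣ 2 := fun h => hp2 ((Nat.prime_dvd_prime_iff_eq hp Nat.prime_two).mp h)
  have step := ZMod.exists_ofDigits_pow_smul_add hp hp2 h2 hw (q := q)
  have h2u := ZMod.isUnit_natCast_of_not_dvd hp h2 q
  simp only [Nat.cast_ofNat] at step h2u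
  obtain ⟨m₀, hm₀⟩ := hg
  refine ⟨fun h m => ?_, fun h => Set.ext fun y => ⟨?_, ?_⟩⟩
  · obtain ⟨l, hl⟩ := step m g h
    exact ⟨l + m₀, by rw [hl, hm₀, pow_add, mul_assoc]⟩
  · rintro ⟨_, ⟨g', ⟨m₁, hg'⟩, rfl⟩, rfl⟩
    obtain ⟨l, hl⟩ := step 0 g' h
    rw [pow_zero, one_smul] at hl
    exact ⟨l + m₁, by rw [hl, hg', pow_add, mul_assoc]⟩
  · rintro ⟨l, rfl⟩
    have := Fact.mk hp
    obtain ⟨w, hw'⟩ := ZMod.ofDigits_surjective p q (2 ^ l * x + ZMod.ofDigits p q h)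
    obtain ⟨l₁, hl₁⟩ := step 0 (w - h) h
    rw [pow_zero, one_smul, sub_add_cancel, hw', add_left_inj] at hl₁
    obtain ⟨n, hn⟩ := h2u.isOfFinOrder.exists_pow_mul_pow_eq_one l₁
    refine ⟨w, ⟨w - h, ⟨n + l, ?_⟩, (sub_add_cancel w h).symm⟩, hw'⟩
    rw [pow_add, mul_assoc, hl₁, ← mul_assoc, hn, one_mul]

theorem stmt15 (p q : ℕ) (hp : p.Prime) (hodd : Odd p) (hq : 1 ≤ q)
    (hw : ¬ (2 ^ (p - 1) ≡ 1 [MOD p ^ 2]))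
    (φ : (Fin q → ZMod p) → ZMod (p ^ q))
    (hφ : ∀ g : Fin q → ZMod p,
      φ g = ∑ i : Fin q, ((g i).val : ZMod (p ^ q)) * (p : ZMod (p ^ q)) ^ (i : ℕ))
    (x : ZMod (p ^ q)) (g : Fin q → ZMod p)
    (hg : φ g ∈ {y : ZMod (p ^ q) | ∃ m : ℕ, y = (2 : ZMod (p ^ q)) ^ m * x}) :
    (∀ (h : Fin q → ZMod p) (m : ℕ),
        φ ((2 : ZMod p) ^ m • g + h)
          ∈ {y : ZMod (p ^ q) | ∃ l : ℕ, y = (2 : ZMod (p ^ q)) ^ l * x + φ h}) ∧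
      ∀ h : Fin q → ZMod p,
        φ '' {w : Fin q → ZMod p |
            ∃ g' ∈ φ ⁻¹' {y : ZMod (p ^ q) | ∃ m : ℕ, y = (2 : ZMod (p ^ q)) ^ m * x},
              w = g' + h}
          = {y : ZMod (p ^ q) | ∃ l : ℕ, y = (2 : ZMod (p ^ q)) ^ l * x + φ h} :=
  stmt15_general p q hp hodd hw φ hφ x g hg
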